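/- arXiv:1605.00499 — 3 statements merged into one kernel-verified Lean document; each statement's English description precedes it below -/
import Mathlib

section
/- Let $Q_n:\Theta\to\mathbb{R}$ be random functions, $\Theta_I\subseteq\Theta$, and suppose (i) $\sup_{\theta\in\Theta_I}Q_n(\theta)$ converges in distribution to a random variable $W$ whose cdf $F_W$ is continuous at its $\alpha$-quantile $w_\alpha$, and (ii) $(w_{n,\alpha})$ is a sequence of random variables with $w_{n,\alpha}\ge w_\alpha+o_P(1)$. Then the set $\widehat\Theta_\alpha=\{\theta\in\Theta: Q_n(\theta)\le w_{n,\alpha}\}$ satisfies $\liminf_{n\to\infty}P(\Theta_I\subseteq\widehat\Theta_\alpha)\ge\alpha$. If instead $w_{n,\alpha}=w_\alpha+o_P(1)$, then $\lim_{n\to\infty}P(\Theta_I\subseteq\widehat\Theta_\alpha)=\alpha$. -/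
/-!
At a continuity point `wα` of `F` the quantile satisfies `F wα = α`, and continuity points of the
monotone `F` are dense, so for every `x < α < y` there are continuity points `c < wα < c'` with
`x < F c` and `F c' < y`. Comparing the coverage event with the event at the deterministic
level `c` (resp. `c'`) costs at most `P(w < c)` (resp. `P(c' < w)`), which vanishes in the
limit, while convergence in distribution gives the limits `F c` and `F c'`.
-/

open MeasureTheory Filter Topology Set

lemma apply_sInf_setOf_le_eq {F : ℝ → ℝ} {α : ℝ}
    (hFtop : Tendsto F atTop (𝓝 1)) (hFbot : Tendsto F atBot (𝓝 0))
    (hα0 : 0 < α) (hα1 : α < 1) (hcont : ContinuousAt F (sInf {c | α ≤ F c})) :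
    F (sInf {c | α ≤ F c}) = α := by
  set S : Set ℝ := {c | α ≤ F c}
  have hne : S.Nonempty :=
    (hFtop.eventually (eventually_gt_nhds hα1)).exists.imp fun _ h => h.le
  obtain ⟨b, hb⟩ := eventually_atBot.1 (hFbot.eventually (eventually_lt_nhds hα0))
  have hbdd : BddBelow S := ⟨b, fun c hc => le_of_not_gt fun hcb => (hb c hcb.le).not_ge hc⟩
  apply le_antisymm
  · have hbelow : ∀ c ∈ Iio (sInf S), F c ≤ α := fun c hc =>
      le_of_not_ge (notMem_of_lt_csInf hc hbdd : c ∉ S)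
    exact le_of_tendsto (hcont.tendsto.mono_left nhdsWithin_le_nhds)
      (eventually_nhdsWithin_of_forall hbelow)
  · have : (𝓝[S] sInf S).NeBot :=
      mem_closure_iff_nhdsWithin_neBot.1 (csInf_mem_closure hne hbdd)
    exact ge_of_tendsto (hcont.tendsto.mono_left nhdsWithin_le_nhds)
      (eventually_nhdsWithin_of_forall (s := S) fun c hc => hc)

lemma Monotone.dense_setOf_continuousAt {F : ℝ → ℝ} (hF : Monotone F) :
    Dense {x | ContinuousAt F x} := by
  simpa only [compl_ofPred, not_not] using hF.countable_not_continuousAt.dense_compl ℝ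

lemma Monotone.exists_lt_continuousAt_lt_apply {F : ℝ → ℝ} {w x : ℝ} (hF : Monotone F)
    (hw : ContinuousAt F w) (hx : x < F w) : ∃ c < w, ContinuousAt F c ∧ x < F c := by
  obtain ⟨l, hlw, hl⟩ := exists_Ioc_subset_of_mem_nhds (hw.eventually (eventually_gt_nhds hx))
    ⟨w - 1, by linarith⟩
  obtain ⟨c, hc, hlc, hcw⟩ := hF.dense_setOf_continuousAt.exists_between hlw
  exact ⟨c, hcw, hc, hl ⟨hlc, hcw.le⟩⟩

lemma Monotone.exists_gt_continuousAt_apply_lt {F : ℝ → ℝ} {w x : ℝ} (hF : Monotone F)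
    (hw : ContinuousAt F w) (hx : F w < x) : ∃ c > w, ContinuousAt F c ∧ F c < x := by
  obtain ⟨u, hwu, hu⟩ := exists_Ico_subset_of_mem_nhds (hw.eventually (eventually_lt_nhds hx))
    ⟨w + 1, by linarith⟩
  obtain ⟨c, hc, hwc, hcu⟩ := hF.dense_setOf_continuousAt.exists_between hwu
  exact ⟨c, hwc, hc, hu ⟨hwc.le, hcu⟩⟩

section Coverage

variable {Ω Θ ι : Type*}

lemma setOf_forall_le_subset_union (Q : Ω → Θ → ℝ) (s : Set Θ) (u v : Ω → ℝ) :
    {ω | ∀ θ ∈ s, Q ω θ ≤ u ω} ⊆ {ω | ∀ θ ∈ s, Q ω θ ≤ v ω} ∪ {ω | v ω < u ω} := by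
  intro ω hω
  by_cases hvu : v ω < u ω
  · exact Or.inr hvu
  · exact Or.inl fun θ hθ => (hω θ hθ).trans (not_lt.1 hvu)

variable [MeasurableSpace Ω] {μ : Measure Ω} [IsFiniteMeasure μ]

lemma tendsto_measureReal_zero_of_subset {l : Filter ι} {s t : ι → Set Ω}
    (hst : ∀ i, s i ⊆ t i) (ht : Tendsto (fun i => μ.real (t i)) l (𝓝 0)) :
    Tendsto (fun i => μ.real (s i)) l (𝓝 0) :=
  squeeze_zero (fun _ => measureReal_nonneg) (fun i => measureReal_mono (hst i)) ht

lemma measureReal_le_add_of_subset_union {s t u : Set Ω} (h : s ⊆ t ∪ u) :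
    μ.real s ≤ μ.real t + μ.real u :=
  (measureReal_mono h).trans (measureReal_union_le t u)

variable {Q : ℕ → Ω → Θ → ℝ} {s : Set Θ} {w : ℕ → Ω → ℝ} {c L x : ℝ}

lemma eventually_lt_measureReal_forall_le
    (hQ : Tendsto (fun n => μ.real {ω | ∀ θ ∈ s, Q n ω θ ≤ c}) atTop (𝓝 L))
    (hw : Tendsto (fun n => μ.real {ω | w n ω < c}) atTop (𝓝 0)) (hx : x < L) :
    ∀ᶠ n in atTop, x < μ.real {ω | ∀ θ ∈ s, Q n ω θ ≤ w n ω} := by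
  filter_upwards [(hQ.sub hw).eventually (eventually_gt_nhds (by simpa using hx))] with n hn
  have hcover := measureReal_le_add_of_subset_union (μ := μ)
    (setOf_forall_le_subset_union (Q n) s (fun _ => c) (w n))
  linarith

lemma eventually_measureReal_forall_le_lt
    (hQ : Tendsto (fun n => μ.real {ω | ∀ θ ∈ s, Q n ω θ ≤ c}) atTop (𝓝 L))
    (hw : Tendsto (fun n => μ.real {ω | c < w n ω}) atTop (𝓝 0)) (hx : L < x) :
    ∀ᶠ n in atTop, μ.real {ω | ∀ θ ∈ s, Q n ω θ ≤ w n ω} < x := by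
  filter_upwards [(hQ.add hw).eventually (eventually_lt_nhds (by simpa using hx))] with n hn
  have hcover := measureReal_le_add_of_subset_union (μ := μ)
    (setOf_forall_le_subset_union (Q n) s (w n) (fun _ => c))
  linarith

end Coverage

/-- Lemma 2.1 (basic coverage lemma): if the sup of the criterion over the identified set
converges in distribution to `W` with cdf `F` continuous at its `α`-quantile `wα`, then
critical values no smaller (resp. equal) to `wα + o_P(1)` yield asymptotic coverage
at least (resp. exactly) `α`. -/
theorem stmt0 {Ω : Type*} [MeasurableSpace Ω] (μ : Measure Ω) [IsProbabilityMeasure μ]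
    {Θ : Type*} (Q : ℕ → Ω → Θ → ℝ) (ΘI : Set Θ)
    (F : ℝ → ℝ) (hFmono : Monotone F)
    (hFtop : Tendsto F atTop (𝓝 1)) (hFbot : Tendsto F atBot (𝓝 0))
    (α : ℝ) (hα0 : 0 < α) (hα1 : α < 1)
    (wα : ℝ) (hwα : wα = sInf {c : ℝ | α ≤ F c})
    (hcontα : ContinuousAt F wα)
    (hconv : ∀ c : ℝ, ContinuousAt F c →
      Tendsto (fun n => (μ {ω | ∀ θ ∈ ΘI, Q n ω θ ≤ c}).toReal) atTop (𝓝 (F c)))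
    (w : ℕ → Ω → ℝ) :
    ((∀ ε : ℝ, 0 < ε →
        Tendsto (fun n => (μ {ω | w n ω < wα - ε}).toReal) atTop (𝓝 0)) →
      α ≤ Filter.liminf (fun n => (μ {ω | ∀ θ ∈ ΘI, Q n ω θ ≤ w n ω}).toReal) atTop) ∧
    ((∀ ε : ℝ, 0 < ε →
        Tendsto (fun n => (μ {ω | ε < |w n ω - wα|}).toReal) atTop (𝓝 0)) →
      Tendsto (fun n => (μ {ω | ∀ θ ∈ ΘI, Q n ω θ ≤ w n ω}).toReal) atTop (𝓝 α)) := by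
  have hFwα : F wα = α := hwα ▸ apply_sInf_setOf_le_eq hFtop hFbot hα0 hα1 (hwα ▸ hcontα)
  have lower (hw : ∀ ε : ℝ, 0 < ε → Tendsto (fun n => μ.real {ω | w n ω < wα - ε}) atTop (𝓝 0))
      (x : ℝ) (hx : x < α) : ∀ᶠ n in atTop, x < μ.real {ω | ∀ θ ∈ ΘI, Q n ω θ ≤ w n ω} := by
    obtain ⟨c, hcw, hc, hxc⟩ := hFmono.exists_lt_continuousAt_lt_apply hcontα (hFwα ▸ hx)
    exact eventually_lt_measureReal_forall_le (hconv c hc)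
      (by simpa using hw (wα - c) (by linarith)) hxc
  constructor
  · intro hw
    refine le_of_forall_lt_imp_le_of_dense fun x hx => le_liminf_of_le ?_
      ((lower hw x hx).mono fun _ => le_of_lt)
    exact isBoundedUnder_of ⟨1, fun _ => measureReal_le_one⟩ |>.isCoboundedUnder_ge
  · intro hw
    refine tendsto_order.2 ⟨lower fun ε hε => ?_, fun x hx => ?_⟩
    · refine tendsto_measureReal_zero_of_subset (fun n ω hω => ?_) (hw ε hε)
      have hlt : w n ω < wα - ε := hω
      exact (lt_abs.2 (Or.inr (by linarith)) : ε < |w n ω - wα|)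
    · obtain ⟨c, hwc, hc, hcx⟩ := hFmono.exists_gt_continuousAt_apply_lt hcontα (hFwα ▸ hx)
      refine eventually_measureReal_forall_le_lt (hconv c hc)
        (tendsto_measureReal_zero_of_subset (fun n ω hω => ?_) (hw (c - wα) (by linarith))) hcx
      have hlt : c < w n ω := hω
      exact (lt_abs.2 (Or.inl (by linarith)) : c - wα < |w n ω - wα|)
end

section
/- Let $Z=(X,Y)$ be a standard bivariate normal vector (independent $N(0,1)$ components), let $\rho\in(-1,1)$, and let $V=Y\sin(\varphi/2)+X\cos(\varphi/2)$ where $\rho=\sin(\varphi/2)$. Then for every $w\ge 0$, $P(Y^2\le w\mid V\ge 0)=\Phi(\sqrt w)-\Phi(-\sqrt w)$, i.e. it equals the chi-squared-1 cdf at $w$, regardless of the value of $\rho$. -/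
/-!
The reflection `(x, y) ↦ (-x, -y)` preserves the law of `(X, Y)`, leaves the event `{Y² ≤ w}`
invariant and exchanges the half-planes `{V ≥ 0}` and `{V ≤ 0}`, whose intersection, a line,
is null. Hence `{V ≥ 0}` cuts both `{Y² ≤ w}` and the whole space exactly in half, and the
conditional probability is the unconditional one, `P(-√w ≤ Y ≤ √w)`.
-/

open MeasureTheory ProbabilityTheory Set

/-- The standard normal cdf. -/
noncomputable def stdNormalCDF (x : ℝ) : ℝ :=
  ((gaussianReal 0 1) (Set.Iic x)).toReal

theorem measureReal_inter_nonneg_eq_half {α : Type*} [MeasurableSpace α] {ν : Measure α}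
    [IsFiniteMeasure ν] {T : α → α} (hT : MeasurePreserving T ν ν) {f : α → ℝ}
    (hf : Measurable f) (hfT : ∀ x, f (T x) = -f x) (hf₀ : ν {x | f x = 0} = 0)
    {S : Set α} (hS : MeasurableSet S) (hST : T ⁻¹' S = S) :
    ν.real (S ∩ {x | 0 ≤ f x}) = ν.real S / 2 := by
  have hreflect : T ⁻¹' (S ∩ {x | 0 ≤ f x}) = S ∩ {x | f x ≤ 0} := by
    rw [preimage_inter, hST]
    ext x
    simp [hfT]
  have hsymm : ν.real (S ∩ {x | f x ≤ 0}) = ν.real (S ∩ {x | 0 ≤ f x}) := by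
    rw [← hreflect]
    exact hT.measureReal_preimage
      (hS.inter (measurableSet_le measurable_const hf)).nullMeasurableSet
  have hunion : (S ∩ {x | 0 ≤ f x}) ∪ (S ∩ {x | f x ≤ 0}) = S := by
    ext x
    simp only [mem_union, mem_inter_iff]
    constructor
    · rintro (⟨hx, -⟩ | ⟨hx, -⟩) <;> exact hx
    · exact fun hx => (le_total 0 (f x)).imp (⟨hx, ·⟩) (⟨hx, ·⟩)
  have hinter : ν.real ((S ∩ {x | 0 ≤ f x}) ∩ (S ∩ {x | f x ≤ 0})) = 0 := by
    refine (measureReal_eq_zero_iff (μ := ν)).mpr (measure_mono_null ?_ hf₀)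
    rintro x ⟨⟨-, h₁⟩, -, h₂⟩
    exact le_antisymm h₂ h₁
  have := measureReal_union_add_inter (μ := ν) (s := S ∩ {x | 0 ≤ f x})
    (t := S ∩ {x | f x ≤ 0}) (hS.inter (measurableSet_le hf measurable_const))
  rw [hunion, hinter, hsymm] at this
  linarith

theorem Measure.prod_setOf_fst_eq_eq_zero {α β : Type*} [MeasurableSpace α] [MeasurableEq α]
    [MeasurableSpace β] {μ : Measure α} [NullSingletonClass μ] [SFinite μ] {ν : Measure β}
    [SFinite ν] {g : β → α} (hg : Measurable g) :
    μ.prod ν {p | p.1 = g p.2} = 0 := by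
  rw [Measure.prod_apply_symm (measurableSet_eq_fun (f := Prod.fst) (g := fun p => g p.2)
    measurable_fst (by fun_prop))]
  simp [preimage]

theorem measureReal_Icc_eq_sub {μ : Measure ℝ} [IsFiniteMeasure μ] [NullSingletonClass μ]
    {a b : ℝ} (hab : a ≤ b) :
    μ.real (Icc a b) = μ.real (Iic b) - μ.real (Iic a) := by
  rw [← measureReal_congr Ioc_ae_eq_Icc, ← Iic_sdiff_Iic,
    measureReal_sdiff (Iic_subset_Iic.mpr hab) measurableSet_Iic]

theorem Real.cos_ne_zero_of_sin_mem_Ioo {x : ℝ} (h₁ : -1 < Real.sin x) (h₂ : Real.sin x < 1) :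
    Real.cos x ≠ 0 := by
  intro hcos
  have := Real.sin_sq_add_cos_sq x
  rw [hcos] at this
  nlinarith

theorem Measure.prod_real_inter_halfPlane_eq_half {μ₁ μ₂ : Measure ℝ} [IsFiniteMeasure μ₁]
    [IsFiniteMeasure μ₂] [NullSingletonClass μ₁] (h₁ : μ₁.map (fun x => -x) = μ₁)
    (h₂ : μ₂.map (fun x => -x) = μ₂) {s c : ℝ} (hc : c ≠ 0) {S : Set (ℝ × ℝ)}
    (hS : MeasurableSet S) (hSneg : (fun p => -p) ⁻¹' S = S) :
    (μ₁.prod μ₂).real (S ∩ {p | 0 ≤ p.2 * s + p.1 * c}) = (μ₁.prod μ₂).real S / 2 := by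
  have hneg : MeasurePreserving (fun p : ℝ × ℝ => -p) (μ₁.prod μ₂) (μ₁.prod μ₂) :=
    (MeasurePreserving.mk measurable_neg h₁).prod ⟨measurable_neg, h₂⟩
  have hline : {p : ℝ × ℝ | p.2 * s + p.1 * c = 0} = {p | p.1 = -(p.2 * s) / c} := by
    ext p
    simp only [mem_ofPred_eq]
    constructor <;> intro h <;> field_simp at h ⊢ <;> linarith
  refine measureReal_inter_nonneg_eq_half hneg (f := fun p => p.2 * s + p.1 * c) (by fun_prop)
    (fun p => by simp only [Prod.fst_neg, Prod.snd_neg]; ring) ?_ hS hSneg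
  rw [hline]
  exact Measure.prod_setOf_fst_eq_eq_zero (g := fun y => -(y * s) / c) (by fun_prop)

theorem gaussianReal_real_setOf_sq_le {w : ℝ} (hw : 0 ≤ w) :
    (gaussianReal 0 1).real {x | x ^ 2 ≤ w} = stdNormalCDF √w - stdNormalCDF (-√w) := by
  have := nullSingletonClass_gaussianReal (μ := 0) one_ne_zero
  have hIcc : {x : ℝ | x ^ 2 ≤ w} = Icc (-√w) √w := by
    ext x
    simp [Real.sq_le hw]
  rw [hIcc, measureReal_Icc_eq_sub (neg_le_self (Real.sqrt_nonneg w))]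
  rfl

theorem ProbabilityTheory.IndepFun.measurePreserving_prodMk {Ω α β : Type*} [MeasurableSpace Ω]
    [MeasurableSpace α] [MeasurableSpace β] {μ : Measure Ω} [IsFiniteMeasure μ] {X : Ω → α}
    {Y : Ω → β} {μX : Measure α} {μY : Measure β} (hXY : IndepFun X Y μ) (hX : Measurable X)
    (hY : Measurable Y) (hμX : μ.map X = μX) (hμY : μ.map Y = μY) :
    MeasurePreserving (fun ω => (X ω, Y ω)) μ (μX.prod μY) := by
  refine ⟨hX.prodMk hY, ?_⟩
  rw [(indepFun_iff_map_prod_eq_prod_map_map hX.aemeasurable hY.aemeasurable).mp hXY, hμX, hμY]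

/-- For independent standard normals `X, Y`, `V = Y sin(φ/2) + X cos(φ/2)` with
`ρ = sin(φ/2) ∈ (-1,1)`: `P(Y² ≤ w ∣ V ≥ 0) = Φ(√w) - Φ(-√w)` for every `w ≥ 0`,
regardless of `ρ`. -/
theorem stmt3 {Ω : Type*} [MeasurableSpace Ω] (μ : Measure Ω) [IsProbabilityMeasure μ]
    (X Y : Ω → ℝ) (hXm : Measurable X) (hYm : Measurable Y)
    (hX : Measure.map X μ = gaussianReal 0 1)
    (hY : Measure.map Y μ = gaussianReal 0 1)
    (hindep : IndepFun X Y μ)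
    (φ ρ : ℝ) (hρ : ρ = Real.sin (φ / 2)) (hρ1 : -1 < ρ) (hρ2 : ρ < 1)
    (w : ℝ) (hw : 0 ≤ w) :
    (μ {ω | (Y ω) ^ 2 ≤ w ∧ 0 ≤ Y ω * Real.sin (φ / 2) + X ω * Real.cos (φ / 2)}).toReal
        / (μ {ω | 0 ≤ Y ω * Real.sin (φ / 2) + X ω * Real.cos (φ / 2)}).toReal
      = stdNormalCDF (Real.sqrt w) - stdNormalCDF (-Real.sqrt w) := by
  have hc := Real.cos_ne_zero_of_sin_mem_Ioo (hρ ▸ hρ1) (hρ ▸ hρ2)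
  have := nullSingletonClass_gaussianReal (μ := 0) one_ne_zero
  have hsymm : (gaussianReal 0 1).map (fun x => -x) = gaussianReal 0 1 := by
    rw [gaussianReal_map_neg, neg_zero]
  have hlaw := hindep.measurePreserving_prodMk hXm hYm hX hY
  have hhalf_meas :
      MeasurableSet {p : ℝ × ℝ | 0 ≤ p.2 * Real.sin (φ / 2) + p.1 * Real.cos (φ / 2)} :=
    measurableSet_le measurable_const (by fun_prop)
  have hsq_meas : MeasurableSet {y : ℝ | y ^ 2 ≤ w} :=
    measurableSet_le (by fun_prop) measurable_const
  have hband_meas : MeasurableSet (Prod.snd ⁻¹' {y : ℝ | y ^ 2 ≤ w} : Set (ℝ × ℝ)) :=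
    measurable_snd hsq_meas
  have hnum : (μ {ω | Y ω ^ 2 ≤ w ∧ 0 ≤ Y ω * Real.sin (φ / 2) + X ω * Real.cos (φ / 2)}).toReal
      = (gaussianReal 0 1).real {y | y ^ 2 ≤ w} / 2 := by
    rw [← (measurePreserving_snd (μ := gaussianReal 0 1)).measureReal_preimage
        hsq_meas.nullMeasurableSet,
      ← Measure.prod_real_inter_halfPlane_eq_half hsymm hsymm hc hband_meas (by ext; simp)]
    exact hlaw.measureReal_preimage (hband_meas.inter hhalf_meas).nullMeasurableSet
  have hden : (μ {ω | 0 ≤ Y ω * Real.sin (φ / 2) + X ω * Real.cos (φ / 2)}).toReal = 1 / 2 := by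
    rw [← probReal_univ (μ := (gaussianReal 0 1).prod (gaussianReal 0 1)),
      ← Measure.prod_real_inter_halfPlane_eq_half hsymm hsymm hc MeasurableSet.univ rfl,
      univ_inter]
    exact hlaw.measureReal_preimage hhalf_meas.nullMeasurableSet
  rw [hnum, hden, gaussianReal_real_setOf_sq_le hw]
  ring
end

section
/- Let $Z\sim N(0,I_{d^*})$ in $\mathbb{R}^{d^*}$ with $d^*\ge 1$, and let $T_1,T_2$ be closed half-spaces of the form $\{z: a'z\le 0\}$ and $\{z: b'z\le 0\}$ for nonzero $a,b\in\mathbb{R}^{d^*}$. Let $W^*=\max_{i\in\{1,2\}}\inf_{t\in T_i}\|Z-t\|^2$. Then $P(W^*\le w)\ge F_{\chi^2_1}(w)$ for all $w\ge 0$, i.e. $W^*$ is stochastically dominated by a chi-squared random variable with one degree of freedom. -/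
/-!
Projecting onto the closed half-space `{z | ⟪a, z⟫ ≤ 0}` moves `Z` by exactly
`(⟪a, Z⟫ / ‖a‖) ∨ 0`, so `W* ≤ w` is the event that both standardized projections
`⟪a, Z⟫ / ‖a‖` and `⟪b, Z⟫ / ‖b‖` are at most `√w`. Each of them is standard normal, because
`Z` is a standard Gaussian vector, and a union bound over the two upper tails, each of mass
`P(N > √w) = P(N < -√w)`, gives `P(W* ≤ w) ≥ 1 - 2 P(N > √w) = P(N² ≤ w)`.
-/

open MeasureTheory ProbabilityTheory Set

open scoped RealInnerProductSpace

namespace Metric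

variable {E : Type*} [NormedAddCommGroup E] [InnerProductSpace ℝ E]

theorem infDist_setOf_inner_nonpos (a x : E) :
    infDist x {z | ⟪a, z⟫ ≤ 0} = max (⟪a, x⟫ / ‖a‖) 0 := by
  rcases eq_or_ne a 0 with rfl | ha
  · simpa using infDist_zero_of_mem (mem_univ x)
  have hna : 0 < ‖a‖ := norm_pos_iff.2 ha
  refine le_antisymm ?_ ((le_infDist ⟨0, by simp⟩).2 fun y (hy : ⟪a, y⟫ ≤ 0) => ?_)
  · set c := max ⟪a, x⟫ 0 / ‖a‖ ^ 2 with hc_def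
    have hc : 0 ≤ c := by positivity
    have hmem : ⟪a, x - c • a⟫ ≤ 0 := by
      rw [inner_sub_right, real_inner_smul_right, real_inner_self_eq_norm_sq,
        div_mul_cancel₀ _ (by positivity)]
      linarith [le_max_left ⟪a, x⟫ 0]
    calc infDist x {z | ⟪a, z⟫ ≤ 0} ≤ dist x (x - c • a) := infDist_le_dist_of_mem hmem
      _ = c * ‖a‖ := by rw [dist_self_sub_right, norm_smul, Real.norm_of_nonneg hc]
      _ = max ⟪a, x⟫ 0 / ‖a‖ := by rw [hc_def]; field_simp
      _ = max (⟪a, x⟫ / ‖a‖) 0 := by rw [← max_div_div_right hna.le, zero_div]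
  · refine max_le (div_le_of_le_mul₀ hna.le dist_nonneg ?_) dist_nonneg
    calc ⟪a, x⟫ ≤ ⟪a, x - y⟫ := by rw [inner_sub_right]; linarith
      _ ≤ ‖a‖ * ‖x - y‖ := real_inner_le_norm a (x - y)
      _ = dist x y * ‖a‖ := by rw [dist_eq_norm, mul_comm]

theorem infDist_setOf_inner_nonpos_sq_le_iff (a x : E) {w : ℝ} (hw : 0 ≤ w) :
    infDist x {z | ⟪a, z⟫ ≤ 0} ^ 2 ≤ w ↔ ⟪a, x⟫ / ‖a‖ ≤ √w := by
  rw [infDist_setOf_inner_nonpos, ← Real.le_sqrt (le_max_right _ _) hw, max_le_iff,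
    and_iff_left (Real.sqrt_nonneg w)]

end Metric

namespace ProbabilityTheory

section StdGaussian

variable {E : Type*} [NormedAddCommGroup E] [InnerProductSpace ℝ E] [FiniteDimensional ℝ E]
  [MeasurableSpace E] [BorelSpace E]

theorem stdGaussian_map_inner (u : E) :
    (stdGaussian E).map (fun x => ⟪u, x⟫) = gaussianReal 0 (‖u‖₊ ^ 2) := by
  have h := IsGaussian.map_eq_gaussianReal (μ := stdGaussian E) (innerSL ℝ u)
  rw [integral_strongDual_stdGaussian, variance_dual_stdGaussian, innerSL_apply_norm] at h
  convert h using 2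
  · ext
    simp
  · rw [← coe_nnnorm, ← NNReal.coe_pow, Real.toNNReal_coe]

theorem stdGaussian_map_inner_div_norm {a : E} (ha : a ≠ 0) :
    (stdGaussian E).map (fun x => ⟪a, x⟫ / ‖a‖) = gaussianReal 0 1 := by
  have hunit : ‖‖a‖⁻¹ • a‖₊ = 1 := by
    rw [nnnorm_smul, nnnorm_inv, nnnorm_norm, inv_mul_cancel₀ (nnnorm_ne_zero_iff.2 ha)]
  simpa [real_inner_smul_left, div_eq_inv_mul, hunit] using stdGaussian_map_inner (‖a‖⁻¹ • a)

end StdGaussian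

variable {Ω : Type*} [MeasurableSpace Ω] {μ : Measure Ω}

theorem iIndepFun.map_eq_stdGaussian {ι : Type*} [Fintype ι] {Z : Ω → EuclideanSpace ℝ ι}
    (hindep : iIndepFun (fun i ω => Z ω i) μ)
    (hlaw : ∀ i, μ.map (fun ω => Z ω i) = gaussianReal 0 1) :
    μ.map Z = stdGaussian (EuclideanSpace ℝ ι) := by
  have hcoord (i : ι) : AEMeasurable (fun ω => Z ω i) μ :=
    .of_map_ne_zero (by simp [hlaw i, NeZero.ne])
  change μ.map (WithLp.toLp 2 ∘ fun ω i => Z ω i) = _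
  rw [← AEMeasurable.map_map_of_aemeasurable (by fun_prop) (aemeasurable_pi_lambda _ hcoord),
    hindep.map_fun_eq_pi_map hcoord, funext hlaw, map_pi_eq_stdGaussian]

theorem measure_Icc_add_measure_Ioi_add_measure_Ioi {ν : Measure ℝ} [IsProbabilityMeasure ν]
    (hν : ν.map Neg.neg = ν) {s : ℝ} (hs : 0 ≤ s) :
    ν (Icc (-s) s) + (ν (Ioi s) + ν (Ioi s)) = 1 := by
  have hleft : ν (Iio (-s)) = ν (Ioi s) := by
    conv_lhs => rw [← hν]
    rw [Measure.map_apply measurable_neg measurableSet_Iio]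
    congr 1
    ext
    simp
  have htails : Disjoint (Iio (-s)) (Ioi s) :=
    disjoint_left.2 fun x (h₁ : x < -s) (h₂ : s < x) => by linarith
  have hmiddle : Disjoint (Icc (-s) s) (Iio (-s) ∪ Ioi s) :=
    disjoint_left.2 fun x ⟨h₁, h₂⟩ h => by
      rcases h with (h | h : x < -s ∨ s < x) <;> linarith
  nth_rw 1 [← hleft]
  rw [← measure_union htails measurableSet_Ioi,
    ← measure_union hmiddle (measurableSet_Iio.union measurableSet_Ioi), ← measure_univ (μ := ν)]
  congr 1
  ext x
  simp only [mem_union, mem_Icc, mem_Iio, mem_Ioi, mem_univ, iff_true]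
  by_contra! h
  linarith [h.1 h.2.1]

theorem measure_Icc_le_measure_le_and_le [IsProbabilityMeasure μ] {ν : Measure ℝ}
    [IsProbabilityMeasure ν] (hν : ν.map Neg.neg = ν) {X Y : Ω → ℝ} (hX : μ.map X = ν)
    (hY : μ.map Y = ν) {s : ℝ} (hs : 0 ≤ s) :
    ν (Icc (-s) s) ≤ μ {ω | X ω ≤ s ∧ Y ω ≤ s} := by
  have htail {V : Ω → ℝ} (hV : μ.map V = ν) : μ {ω | s < V ω} = ν (Ioi s) := by
    rw [← hV, Measure.map_apply_of_aemeasurable (.of_map_ne_zero (by simp [hV, NeZero.ne]))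
      measurableSet_Ioi]
    rfl
  have hunion : 1 ≤ μ {ω | X ω ≤ s ∧ Y ω ≤ s} + (μ {ω | s < X ω} + μ {ω | s < Y ω}) :=
    calc 1 = μ univ := measure_univ.symm
      _ ≤ μ {ω | X ω ≤ s ∧ Y ω ≤ s} + μ {ω | X ω ≤ s ∧ Y ω ≤ s}ᶜ := measure_univ_le_add_compl _
      _ ≤ _ := by
        gcongr
        refine (measure_mono fun ω hω => ?_).trans (measure_union_le _ _)
        simp only [mem_compl_iff, mem_ofPred_eq, not_and_or, not_le] at hω
        exact hω
  rw [htail hX, htail hY, ← measure_Icc_add_measure_Ioi_add_measure_Ioi hν hs] at hunion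
  exact ENNReal.le_of_add_le_add_right (by finiteness) hunion

end ProbabilityTheory

theorem stmt5_general {d : ℕ} {Ω : Type*} [MeasurableSpace Ω]
    (μ : Measure Ω) [IsProbabilityMeasure μ]
    (Z : Ω → EuclideanSpace ℝ (Fin d))
    (hlaw : ∀ i : Fin d, Measure.map (fun ω => Z ω i) μ = gaussianReal 0 1)
    (hindep : iIndepFun (fun (i : Fin d) (ω : Ω) => Z ω i) μ)
    (a b : EuclideanSpace ℝ (Fin d)) (ha : a ≠ 0) (hb : b ≠ 0)
    (w : ℝ) (hw : 0 ≤ w) :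
    ((gaussianReal 0 1) {x : ℝ | x ^ 2 ≤ w}).toReal ≤
      (μ {ω | max ((Metric.infDist (Z ω) {z : EuclideanSpace ℝ (Fin d) | (inner ℝ a z : ℝ) ≤ 0}) ^ 2)
              ((Metric.infDist (Z ω) {z : EuclideanSpace ℝ (Fin d) | (inner ℝ b z : ℝ) ≤ 0}) ^ 2)
            ≤ w}).toReal := by
  have hZ := hindep.map_eq_stdGaussian hlaw
  have hdirection {c : EuclideanSpace ℝ (Fin d)} (hc : c ≠ 0) :
      μ.map (fun ω => ⟪c, Z ω⟫ / ‖c‖) = gaussianReal 0 1 := by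
    rw [← stdGaussian_map_inner_div_norm hc, ← hZ,
      AEMeasurable.map_map_of_aemeasurable (by fun_prop) (.of_map_ne_zero (by simp [hZ, NeZero.ne]))]
    rfl
  have hsymm : (gaussianReal 0 1).map Neg.neg = gaussianReal 0 1 := by
    simpa using gaussianReal_map_neg (μ := 0) (v := 1)
  have hchi : {x : ℝ | x ^ 2 ≤ w} = Icc (-√w) √w := by
    ext
    simp [Real.sq_le hw]
  simp only [max_le_iff, Metric.infDist_setOf_inner_nonpos_sq_le_iff _ _ hw, hchi]
  exact ENNReal.toReal_mono (measure_ne_top _ _) <|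
    measure_Icc_le_measure_le_and_le hsymm (hdirection ha) (hdirection hb) (Real.sqrt_nonneg w)

/-- For `Z ~ N(0, I_{d*})` and closed half-spaces `T₁ = {z : a'z ≤ 0}`, `T₂ = {z : b'z ≤ 0}`
with `a, b ≠ 0`, the statistic `W* = max_i inf_{t ∈ T_i} ‖Z - t‖²` satisfies
`P(W* ≤ w) ≥ F_{χ²₁}(w)` for all `w ≥ 0`. -/
theorem stmt5 {d : ℕ} (hd : 1 ≤ d) {Ω : Type*} [MeasurableSpace Ω]
    (μ : Measure Ω) [IsProbabilityMeasure μ]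
    (Z : Ω → EuclideanSpace ℝ (Fin d)) (hZm : Measurable Z)
    (hlaw : ∀ i : Fin d, Measure.map (fun ω => Z ω i) μ = gaussianReal 0 1)
    (hindep : iIndepFun (fun (i : Fin d) (ω : Ω) => Z ω i) μ)
    (a b : EuclideanSpace ℝ (Fin d)) (ha : a ≠ 0) (hb : b ≠ 0)
    (w : ℝ) (hw : 0 ≤ w) :
    ((gaussianReal 0 1) {x : ℝ | x ^ 2 ≤ w}).toReal ≤
      (μ {ω | max ((Metric.infDist (Z ω) {z : EuclideanSpace ℝ (Fin d) | (inner ℝ a z : ℝ) ≤ 0}) ^ 2)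
              ((Metric.infDist (Z ω) {z : EuclideanSpace ℝ (Fin d) | (inner ℝ b z : ℝ) ≤ 0}) ^ 2)
            ≤ w}).toReal :=
  stmt5_general μ Z hlaw hindep a b ha hb w hw
end
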